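/- arXiv:2304.02722 — 2 statements merged into one kernel-verified Lean document; each statement's English description precedes it below -/
import Mathlib

section
/- Suppose a nonnegative absolutely continuous function f on [0,1] satisfies f(t) ≤ K·(f'(t))² for almost every t ∈ [t₀, 1] where f > 0 on (t₀,1], f(t₀) = 0, and K > 0. Then √(f(1)) ≥ (1 − t₀)/(2√K). -/
/-!
On any interval `[a, 1]` with `t₀ < a`, monotonicity and `f ≤ K (f')²` give
`f c - f a = ∫ f' ≥ ∫ √f / √K`. A first-crossing argument compares `f` with the solution
`q t = ((t - a) / (2√K))²` of `q' = √q / √K`, `q a = 0 < f a`, so `q < f` on `[a, 1]`, i.e.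
`√(f 1) > (1 - a) / (2√K)`. Letting `a → t₀` gives the bound. The comparison needs the strict
start `q a < f a`: started at `t₀`, where `f` vanishes, it would fail, since `q' = √q / √K`
also has the solution `0`.
-/

open MeasureTheory Set Filter Topology intervalIntegral

theorem lt_of_integral_comp_le_sub {φ f q : ℝ → ℝ} {a b : ℝ}
    (hφ_mono : Monotone φ) (hφ_cont : Continuous φ) (hf : ContinuousOn f (Icc a b))
    (hf_int : ∀ c ∈ Icc a b, ∫ t in a..c, φ (f t) ≤ f c - f a)
    (hq : ∀ t ∈ Icc a b, HasDerivAt q (φ (q t)) t) (hqa : q a < f a) :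
    ∀ t ∈ Icc a b, q t < f t := by
  by_contra! ⟨t, ht, hft⟩
  have hq_cont : ContinuousOn q (Icc a b) := fun t ht ↦
    (hq t ht).continuousAt.continuousWithinAt
  set S := {t ∈ Icc a b | f t ≤ q t}
  have hS_bdd : BddBelow S := ⟨a, fun t ht ↦ ht.1.1⟩
  obtain ⟨⟨hac, hcb⟩, hfqc⟩ : sInf S ∈ S :=
    (isClosed_Icc.isClosed_le hf hq_cont).csInf_mem ⟨t, ht, hft⟩ hS_bdd
  set c := sInf S
  have hq_lt_f : ∀ t ∈ Ioo a c, q t < f t := fun t ht ↦ lt_of_not_ge fun h ↦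
    (csInf_le hS_bdd ⟨⟨ht.1.le, ht.2.le.trans hcb⟩, h⟩).not_gt ht.2
  have h_sub : Icc a c ⊆ Icc a b := Icc_subset_Icc_right hcb
  have hφq_int : IntervalIntegrable (fun t ↦ φ (q t)) volume a c :=
    (hφ_cont.comp_continuousOn (hq_cont.mono h_sub)).intervalIntegrable_of_Icc hac
  have h_int_q : ∫ t in a..c, φ (q t) = q c - q a :=
    integral_eq_sub_of_hasDerivAt (fun t ht ↦ hq t (h_sub (uIcc_of_le hac ▸ ht))) hφq_int
  have h_mono : ∫ t in a..c, φ (q t) ≤ ∫ t in a..c, φ (f t) :=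
    integral_mono_on_of_le_Ioo hac hφq_int
      ((hφ_cont.comp_continuousOn (hf.mono h_sub)).intervalIntegrable_of_Icc hac)
      fun t ht ↦ hφ_mono (hq_lt_f t ht).le
  linarith [hf_int c ⟨hac, hcb⟩]

theorem hasDerivAt_sq_sub_div (K : ℝ) {a t : ℝ} (hat : a ≤ t) :
    HasDerivAt (fun s ↦ ((s - a) / (2 * √K)) ^ 2)
      (√(((t - a) / (2 * √K)) ^ 2) / √K) t := by
  rw [Real.sqrt_sq (div_nonneg (sub_nonneg.2 hat) (by positivity))]
  refine ((((hasDerivAt_id' t).sub_const a).div_const (2 * √K)).pow 2).congr_deriv ?_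
  ring

theorem sub_div_lt_sqrt_of_integral_sqrt_le {f : ℝ → ℝ} {K a b : ℝ} (hab : a ≤ b)
    (hf : ContinuousOn f (Icc a b)) (hfa : 0 < f a)
    (hf_int : ∀ c ∈ Icc a b, ∫ t in a..c, √(f t) / √K ≤ f c - f a) :
    (b - a) / (2 * √K) < √(f b) := by
  have hq := lt_of_integral_comp_le_sub (φ := fun x ↦ √x / √K)
    (Real.sqrt_monotone.div_const (Real.sqrt_nonneg K))
    (Real.continuous_sqrt.div_const _) hf hf_int
    (fun t ht ↦ hasDerivAt_sq_sub_div K ht.1) (by simpa using hfa) b ⟨hab, le_rfl⟩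
  exact (Real.lt_sqrt (div_nonneg (sub_nonneg.2 hab) (by positivity))).2 hq

theorem integral_sqrt_div_sqrt_le_sub {f : ℝ → ℝ} {K a b : ℝ} (hK : 0 < K) (hab : a ≤ b)
    (hf_mono : MonotoneOn f (Icc a b)) (hf_ftc : f b - f a = ∫ t in a..b, deriv f t)
    (hf_ineq : ∀ᵐ t ∂volume.restrict (Icc a b), f t ≤ K * deriv f t ^ 2) :
    ∫ t in a..b, √(f t) / √K ≤ f b - f a := by
  have hf_mono' : MonotoneOn f (uIcc a b) := uIcc_of_le hab ▸ hf_mono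
  rw [hf_ftc]
  refine integral_mono_ae_restrict (μ := volume) hab
    ((Real.sqrt_monotone.div_const (Real.sqrt_nonneg K)).comp_monotoneOn
      hf_mono').intervalIntegrable
    hf_mono'.intervalIntegrable_deriv ?_
  rw [← Measure.restrict_congr_set Ioo_ae_eq_Icc] at hf_ineq ⊢
  filter_upwards [hf_ineq, ae_restrict_mem measurableSet_Ioo] with t ht_ineq ht
  have h_deriv : 0 ≤ deriv f t :=
    derivWithin_of_mem_nhds (f := f) (Icc_mem_nhds ht.1 ht.2) ▸ hf_mono.derivWithin_nonneg
  rw [div_le_iff₀ (Real.sqrt_pos.2 hK), Real.sqrt_le_iff, mul_pow, Real.sq_sqrt hK.le]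
  exact ⟨by positivity, by linarith⟩

theorem continuousOn_Icc_of_sub_eq_integral {f g : ℝ → ℝ} {a b : ℝ}
    (hg : IntervalIntegrable g volume a b) (hf : ∀ c ∈ Icc a b, f c - f a = ∫ t in a..c, g t) :
    ContinuousOn f (Icc a b) := by
  refine ((continuousOn_const (c := f a)).add ((continuousOn_primitive_interval' hg
    left_mem_uIcc).mono Icc_subset_uIcc)).congr fun c hc ↦ ?_
  show f c = f a + ∫ t in a..c, g t
  linarith [hf c hc]

theorem stmt1_general (f : ℝ → ℝ) (K : ℝ) (hK : 0 < K)
    (hmono : MonotoneOn f (Set.Icc (0 : ℝ) 1))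
    (t₀ : ℝ)
    (ht₀mem : t₀ ∈ Set.Icc (0 : ℝ) 1)
    (hpos : ∀ t ∈ Set.Ioc t₀ 1, 0 < f t)
    (hFTC : ∀ a b : ℝ, t₀ ≤ a → a ≤ b → b ≤ 1 →
      f b - f a = ∫ t in a..b, deriv f t)
    (hineq : ∀ᵐ t ∂(volume.restrict (Set.Icc t₀ 1)),
      f t ≤ K * (deriv f t) ^ 2) :
    Real.sqrt (f 1) ≥ (1 - t₀) / (2 * Real.sqrt K) := by
  rcases ht₀mem.2.eq_or_lt with rfl | ht₀1
  · simp
  have h_bound : ∀ a ∈ Ioc t₀ 1, (1 - a) / (2 * √K) ≤ √(f 1) := by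
    rintro a ⟨hta, ha1⟩
    have hmono_a : MonotoneOn f (Icc a 1) :=
      hmono.mono (Icc_subset_Icc_left (ht₀mem.1.trans hta.le))
    have hcont : ContinuousOn f (Icc a 1) :=
      continuousOn_Icc_of_sub_eq_integral
        (MonotoneOn.intervalIntegrable_deriv (uIcc_of_le ha1 ▸ hmono_a))
        fun c hc ↦ hFTC a c hta.le hc.1 hc.2
    refine (sub_div_lt_sqrt_of_integral_sqrt_le ha1 hcont (hpos a ⟨hta, ha1⟩) fun c hc ↦ ?_).le
    exact integral_sqrt_div_sqrt_le_sub hK hc.1 (hmono_a.mono (Icc_subset_Icc_right hc.2))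
      (hFTC a c hta.le hc.1 hc.2)
      (ae_restrict_of_ae_restrict_of_subset (Icc_subset_Icc hta.le hc.2) hineq)
  have h_lim : Tendsto (fun a ↦ (1 - a) / (2 * √K)) (𝓝[>] t₀) (𝓝 ((1 - t₀) / (2 * √K))) :=
    ((continuous_const.sub continuous_id).div_const _).continuousWithinAt
  exact le_of_tendsto h_lim (eventually_of_mem (Ioc_mem_nhdsGT ht₀1) h_bound)

/-- If a nonnegative absolutely continuous nondecreasing function `f` on
`[0,1]` satisfies `f ≤ K·(f')²` a.e. on `[t₀,1]`, where `t₀ = inf{t : f(t) > 0}`,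
`f(t₀) = 0`, `f > 0` on `(t₀,1]` and `K > 0`, then `√(f 1) ≥ (1 − t₀)/(2√K)`.
(Absolute continuity is encoded by the fundamental theorem of calculus for `f`.) -/
theorem stmt1 (f : ℝ → ℝ) (K : ℝ) (hK : 0 < K)
    (hf0 : ∀ t ∈ Set.Icc (0 : ℝ) 1, 0 ≤ f t)
    (hmono : MonotoneOn f (Set.Icc (0 : ℝ) 1))
    (hf1 : 0 < f 1)
    (t₀ : ℝ)
    (ht₀ : t₀ = sInf {t | t ∈ Set.Icc (0 : ℝ) 1 ∧ 0 < f t})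
    (ht₀mem : t₀ ∈ Set.Icc (0 : ℝ) 1)
    (hft₀ : f t₀ = 0)
    (hpos : ∀ t ∈ Set.Ioc t₀ 1, 0 < f t)
    (hFTC : ∀ a b : ℝ, t₀ ≤ a → a ≤ b → b ≤ 1 →
      f b - f a = ∫ t in a..b, deriv f t)
    (hineq : ∀ᵐ t ∂(volume.restrict (Set.Icc t₀ 1)),
      f t ≤ K * (deriv f t) ^ 2) :
    Real.sqrt (f 1) ≥ (1 - t₀) / (2 * Real.sqrt K) :=
  stmt1_general f K hK hmono t₀ ht₀mem hpos hFTC hineq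
end

section
/- Let f : [θ/2, 3θ/4] → ℝ be absolutely continuous and nonincreasing with f(t) > 0 for all t, and suppose f(t) ≤ β·(f'(t))² almost everywhere, where β > 0. Then √(f(θ/2)) − √(f(3θ/4)) ≥ θ/(8√β). In particular, if √(f(θ/2)) < θ/(8√β), the hypotheses lead to a contradiction, so f(3θ/4) ≤ 0 must fail to be positive. -/
/-!
Since `f` is antitone, `f' ≤ 0`, so the hypothesis gives `√f ≤ √β · (-f')` a.e. Integrating over
`[s, t]` and using that `√f` is antitone yields
`(t - s) √f(t) ≤ √β (f s - f t) = √β (√f(s) - √f(t)) (√f(s) + √f(t))`, a discrete form of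
`(2 √β √f)' ≤ -1`. Summing over a uniform partition of mesh `δ` gives
`b - a ≤ (2 √β + δ / (2 √f(b))) (√f(a) - √f(b))`, and we let `δ → 0`.
-/

open MeasureTheory Set Filter Topology

lemma AntitoneOn.deriv_nonpos_of_mem_nhds {f : ℝ → ℝ} {s : Set ℝ} {x : ℝ}
    (hf : AntitoneOn f s) (hs : s ∈ 𝓝 x) : deriv f x ≤ 0 :=
  (derivWithin_of_mem_nhds hs).symm.trans_le hf.derivWithin_nonpos

lemma ae_sqrt_le_sqrt_mul_neg_deriv {f : ℝ → ℝ} {a b β : ℝ}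
    (hf : AntitoneOn f (Icc a b))
    (hineq : ∀ᵐ t ∂volume.restrict (Icc a b), f t ≤ β * deriv f t ^ 2) :
    ∀ᵐ t ∂volume.restrict (Ioo a b), √(f t) ≤ √β * -deriv f t := by
  filter_upwards [ae_restrict_of_ae_restrict_of_subset Ioo_subset_Icc_self hineq,
    ae_restrict_mem measurableSet_Ioo] with t ht hmem
  have hneg : deriv f t ≤ 0 := hf.deriv_nonpos_of_mem_nhds (Icc_mem_nhds hmem.1 hmem.2)
  calc √(f t) ≤ √(β * deriv f t ^ 2) := Real.sqrt_le_sqrt ht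
    _ = √β * -deriv f t := by
      rw [Real.sqrt_mul' _ (sq_nonneg _), Real.sqrt_sq_eq_abs, abs_of_nonpos hneg]

/-- Otherwise the integral takes the junk value `0`, so `f` is constant and `f' = 0` on `(a, b)`. -/
lemma AntitoneOn.intervalIntegrable_deriv {f : ℝ → ℝ} {a b : ℝ} (hab : a < b)
    (hf : AntitoneOn f (Icc a b)) (hFTC : f b - f a = ∫ t in a..b, deriv f t)
    (hne : ∀ᵐ t ∂volume.restrict (Ioo a b), deriv f t ≠ 0) :
    IntervalIntegrable (deriv f) volume a b := by
  by_contra hint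
  rw [intervalIntegral.integral_undef hint] at hFTC
  have hconst : ∀ t ∈ Ioo a b, f t = f a := fun t ht ↦ le_antisymm
    (hf (left_mem_Icc.2 hab.le) (Ioo_subset_Icc_self ht) ht.1.le)
    (by linarith [hf (Ioo_subset_Icc_self ht) (right_mem_Icc.2 hab.le) ht.2.le])
  have hzero : ∀ᵐ t ∂volume.restrict (Ioo a b), deriv f t = 0 := by
    filter_upwards [ae_restrict_mem measurableSet_Ioo] with t ht
    rw [Filter.EventuallyEq.deriv_eq (eventuallyEq_of_mem (Ioo_mem_nhds ht.1 ht.2) hconst)]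
    exact deriv_const t (f a)
  have hnull : volume (Ioo a b) = 0 := by
    rw [← Measure.restrict_eq_zero, ← ae_eq_bot, ← Filter.eventually_false_iff_eq_bot]
    filter_upwards [hne, hzero] with t h1 h2 using h1 h2
  exact hab.not_ge (by simpa [Real.volume_Ioo] using hnull)

lemma mul_sqrt_le_sqrt_mul_sub {f : ℝ → ℝ} {s t β : ℝ} (hst : s ≤ t)
    (hf : AntitoneOn f (Icc s t)) (hint : IntervalIntegrable (deriv f) volume s t)
    (hFTC : f t - f s = ∫ u in s..t, deriv f u)
    (hderiv : ∀ᵐ u ∂volume.restrict (Ioo s t), √(f u) ≤ √β * -deriv f u) :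
    (t - s) * √(f t) ≤ √β * (f s - f t) := by
  have hmono : (fun _ ↦ √(f t)) ≤ᵐ[volume.restrict (Icc s t)] fun u ↦ √β * -deriv f u := by
    rw [← Measure.restrict_congr_set Ioo_ae_eq_Icc]
    filter_upwards [hderiv, ae_restrict_mem measurableSet_Ioo] with u hu hmem
    refine (Real.sqrt_le_sqrt ?_).trans hu
    exact hf (Ioo_subset_Icc_self hmem) (right_mem_Icc.2 hst) hmem.2.le
  calc (t - s) * √(f t) = ∫ _ in s..t, √(f t) := by simp
    _ ≤ ∫ u in s..t, √β * -deriv f u :=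
      intervalIntegral.integral_mono_ae_restrict hst intervalIntegrable_const
        (hint.neg.const_mul _) hmono
    _ = √β * (f s - f t) := by
      rw [intervalIntegral.integral_const_mul, intervalIntegral.integral_neg, ← hFTC, neg_sub]

lemma le_mul_sub_of_mul_le_sq_sub_sq {c m x y δ : ℝ} (hm : 0 < m) (hmx : m ≤ x) (hxy : x ≤ y)
    (hδ : 0 ≤ δ) (h : δ * x ≤ c * (y ^ 2 - x ^ 2)) :
    δ ≤ (2 * c + δ / (2 * m)) * (y - x) := by
  have hd : δ * (y - x) ≤ δ * (y - x) * ((x + y) / (2 * m)) := by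
    refine le_mul_of_one_le_right (mul_nonneg hδ (sub_nonneg.2 hxy)) ?_
    rw [one_le_div (by positivity)]
    linarith
  have hsum : (x + y) * δ ≤ (x + y) * ((2 * c + δ / (2 * m)) * (y - x)) := by
    calc (x + y) * δ = 2 * (δ * x) + δ * (y - x) := by ring
      _ ≤ 2 * (c * (y ^ 2 - x ^ 2)) + δ * (y - x) * ((x + y) / (2 * m)) := by gcongr
      _ = (x + y) * ((2 * c + δ / (2 * m)) * (y - x)) := by
        field_simp
        ring
  exact le_of_mul_le_mul_left hsum (by linarith)

theorem sub_le_mul_sub_of_forall_sub_le_mul_sub {g : ℝ → ℝ} {a b C M : ℝ} (hab : a ≤ b)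
    (h : ∀ s t, a ≤ s → s ≤ t → t ≤ b → t - s ≤ (C + (t - s) / M) * (g s - g t)) :
    b - a ≤ C * (g a - g b) := by
  have hstep : ∀ n : ℕ, 0 < n → b - a ≤ (C + (b - a) / n / M) * (g a - g b) := by
    intro n hn
    have hn' : (0 : ℝ) < n := Nat.cast_pos.2 hn
    set δ := (b - a) / n
    have hδ : 0 ≤ δ := div_nonneg (sub_nonneg.2 hab) hn'.le
    let p : ℕ → ℝ := fun i ↦ a + i * δ
    have hp0 : p 0 = a := by simp [p]
    have hpn : p n = b := by simp only [p, δ]; field_simp; ring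
    have hsucc : ∀ i, p (i + 1) - p i = δ := fun i ↦ by simp only [p]; push_cast; ring
    have hp : ∀ i ∈ Finset.range n, a ≤ p i ∧ p i ≤ p (i + 1) ∧ p (i + 1) ≤ b := by
      intro i hi
      have hi : (i : ℝ) + 1 ≤ n := by exact_mod_cast Finset.mem_range.1 hi
      refine ⟨le_add_of_nonneg_right (by positivity), by linarith [hsucc i], ?_⟩
      calc p (i + 1) = a + (i + 1) * δ := by simp [p]
        _ ≤ a + n * δ := by gcongr
        _ = b := hpn
    calc b - a = ∑ i ∈ Finset.range n, (p (i + 1) - p i) := by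
          rw [Finset.sum_range_sub (f := p), hp0, hpn]
      _ ≤ ∑ i ∈ Finset.range n, (C + δ / M) * (g (p i) - g (p (i + 1))) := by
          refine Finset.sum_le_sum fun i hi ↦ ?_
          obtain ⟨h1, h2, h3⟩ := hp i hi
          simpa only [hsucc] using h _ _ h1 h2 h3
      _ = (C + δ / M) * (g a - g b) := by
          rw [← Finset.mul_sum, Finset.sum_range_sub' (f := fun i ↦ g (p i)), hp0, hpn]
  have hlim : Tendsto (fun n : ℕ ↦ (C + (b - a) / n / M) * (g a - g b)) atTop
      (𝓝 ((C + 0 / M) * (g a - g b))) :=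
    ((tendsto_const_div_atTop_nhds_zero_nat (b - a)).div_const M |>.const_add C).mul_const _
  rw [zero_div, add_zero] at hlim
  exact ge_of_tendsto hlim (eventually_atTop.2 ⟨1, fun n hn ↦ hstep n hn⟩)

theorem sub_le_two_mul_sqrt_mul_sub_sqrt {f : ℝ → ℝ} {a b β : ℝ} (hab : a < b)
    (hpos : ∀ t ∈ Icc a b, 0 < f t) (hf : AntitoneOn f (Icc a b))
    (hFTC : ∀ s t, a ≤ s → s ≤ t → t ≤ b → f t - f s = ∫ u in s..t, deriv f u)
    (hineq : ∀ᵐ t ∂volume.restrict (Icc a b), f t ≤ β * deriv f t ^ 2) :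
    b - a ≤ 2 * √β * (√(f a) - √(f b)) := by
  have hderiv := ae_sqrt_le_sqrt_mul_neg_deriv hf hineq
  have hint : IntervalIntegrable (deriv f) volume a b := by
    refine hf.intervalIntegrable_deriv hab (hFTC a b le_rfl hab.le le_rfl) ?_
    filter_upwards [hderiv, ae_restrict_mem measurableSet_Ioo] with t ht hmem hzero
    have := Real.sqrt_pos.2 (hpos t (Ioo_subset_Icc_self hmem))
    rw [hzero, neg_zero, mul_zero] at ht
    linarith
  have hm : 0 < √(f b) := Real.sqrt_pos.2 (hpos b (right_mem_Icc.2 hab.le))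
  refine sub_le_mul_sub_of_forall_sub_le_mul_sub (g := fun t ↦ √(f t)) (M := 2 * √(f b))
    hab.le fun s t has hst htb ↦ ?_
  have hs : s ∈ Icc a b := ⟨has, hst.trans htb⟩
  have ht : t ∈ Icc a b := ⟨has.trans hst, htb⟩
  have hsub : Icc s t ⊆ Icc a b := Icc_subset_Icc has htb
  have hstep := mul_sqrt_le_sqrt_mul_sub hst (hf.mono hsub)
    (hint.mono_set (by rwa [uIcc_of_le hst, uIcc_of_le hab.le]))
    (hFTC s t has hst htb) (ae_restrict_of_ae_restrict_of_subset (Ioo_subset_Ioo has htb) hderiv)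
  refine le_mul_sub_of_mul_le_sq_sub_sq hm
    (Real.sqrt_le_sqrt (hf ht (right_mem_Icc.2 hab.le) htb)) (Real.sqrt_le_sqrt (hf hs ht hst))
    (sub_nonneg.2 hst) ?_
  rwa [Real.sq_sqrt (hpos s hs).le, Real.sq_sqrt (hpos t ht).le]

/-- Let `f : [θ/2, 3θ/4] → ℝ` be absolutely continuous (encoded by the
fundamental theorem of calculus), nonincreasing, positive, and satisfy `f ≤ β·(f')²`
a.e. on the interval, with `θ, β > 0`.  Then `√(f(θ/2)) − √(f(3θ/4)) ≥ θ/(8√β)`.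
In particular if `√(f(θ/2)) < θ/(8√β)` the hypotheses are contradictory. -/
theorem stmt2 (θ β : ℝ) (hθ : 0 < θ) (hβ : 0 < β) (f : ℝ → ℝ)
    (hpos : ∀ t ∈ Set.Icc (θ / 2) (3 * θ / 4), 0 < f t)
    (hanti : AntitoneOn f (Set.Icc (θ / 2) (3 * θ / 4)))
    (hFTC : ∀ a b : ℝ, θ / 2 ≤ a → a ≤ b → b ≤ 3 * θ / 4 →
      f b - f a = ∫ t in a..b, deriv f t)
    (hineq : ∀ᵐ t ∂(volume.restrict (Set.Icc (θ / 2) (3 * θ / 4))),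
      f t ≤ β * (deriv f t) ^ 2) :
    Real.sqrt (f (θ / 2)) - Real.sqrt (f (3 * θ / 4)) ≥ θ / (8 * Real.sqrt β) ∧
    (Real.sqrt (f (θ / 2)) < θ / (8 * Real.sqrt β) → False) := by
  have hmain := sub_le_two_mul_sqrt_mul_sub_sqrt (by linarith) hpos hanti hFTC hineq
  have hgap : θ / (8 * √β) ≤ √(f (θ / 2)) - √(f (3 * θ / 4)) := by
    rw [div_le_iff₀ (by positivity)]
    linarith
  exact ⟨hgap, fun hlt ↦ by linarith [Real.sqrt_nonneg (f (3 * θ / 4))]⟩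
end
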